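/- For integers n ≥ 1, a ≥ 0, b with n + b + 1 ≥ 0, define F_n(t) = E_n(t)/(t-1)^{2n} where E_n(x) = Σ_k ⟨⟨n,k⟩⟩ x^k is the generating polynomial of second-order Eulerian numbers. Then ∫_{-∞}^0 t^a (1-t)^{-a-b-2} F_n(t) dt = (-1)^a/(2n+a+b+1) · Σ_{k=0}^{n-1} (-1)^k ⟨⟨n,k⟩⟩ / C(2n+a+b, k+a). -/

import Mathlib

open MeasureTheory

/-- Second-order Eulerian numbers. -/
def eulerian2 : ℕ → ℤ → ℝ
  | 0, k => if k = 0 then 1 else 0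
  | n+1, k => ((k : ℝ) + 1) * eulerian2 n k + (2 * (n : ℝ) + 1 - (k : ℝ)) * eulerian2 n (k - 1)

/-- The second-order Eulerian polynomial E_n(t) = Σ_k ⟨⟨n,k⟩⟩ t^k. -/
def E2poly (n : ℕ) (t : ℝ) : ℝ := ∑ k ∈ Finset.range (n + 1), eulerian2 n k * t ^ k

/-- F_n(t) = E_n(t)/(t-1)^{2n}. -/
noncomputable def Ffun (n : ℕ) (t : ℝ) : ℝ := E2poly n t / (t - 1) ^ (2 * n)

open Set
open scoped Nat

/-!
Since `⟨⟨n,k⟩⟩ = 0` for `k ≥ n`, the integrand is `∑_{k<n} ⟨⟨n,k⟩⟩ t^(k+a) (1-t)^(-N-2)` with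
`N = 2n+a+b ≥ k+a`. The involution `t ↦ t/(t-1)` maps `[0,1)` onto `(-∞,0]` and turns the term
of index `k` into `(-1)^(k+a)` times the Beta integral
`∫₀¹ u^p (1-u)^(N-p) du = p! (N-p)! / (N+1)! = 1 / ((N+1) C(N,p))`, `p = k+a`.
-/

theorem integral_pow_mul_one_sub_pow (m c : ℕ) :
    ∫ x in (0 : ℝ)..1, x ^ m * (1 - x) ^ c = (m ! * c ! : ℝ) / (m + c + 1)! := by
  have hbeta := Complex.betaIntegral_eq_Gamma_mul_div (m + 1) (c + 1)
    (by norm_cast; omega) (by norm_cast; omega)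
  rw [show (m + 1 + (c + 1) : ℂ) = ((m + c + 1 : ℕ) : ℂ) + 1 by push_cast; ring,
    Complex.Gamma_nat_eq_factorial, Complex.Gamma_nat_eq_factorial,
    Complex.Gamma_nat_eq_factorial, Complex.betaIntegral] at hbeta
  simp only [add_sub_cancel_right, Complex.cpow_natCast] at hbeta
  rw [← Complex.ofReal_inj, ← intervalIntegral.integral_ofReal]
  push_cast
  exact hbeta

theorem factorial_mul_factorial_div_factorial_succ (m c : ℕ) :
    (m ! * c ! : ℝ) / (m + c + 1)! = ((((m + c : ℕ) : ℝ) + 1) * (m + c).choose m)⁻¹ := by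
  have h := Nat.add_choose_mul_factorial_mul_factorial c m
  rw [add_comm c m] at h
  rw [Nat.factorial_succ, ← h]
  push_cast
  field_simp

theorem image_div_sub_one_Ico : (fun u : ℝ => u / (u - 1)) '' Ico 0 1 = Iic 0 := by
  ext t
  constructor
  · rintro ⟨u, ⟨hu0, hu1⟩, rfl⟩
    exact div_nonpos_of_nonneg_of_nonpos hu0 (by linarith)
  · intro (ht : t ≤ 0)
    have hne : t - 1 ≠ 0 := by linarith
    refine ⟨t / (t - 1), ⟨div_nonneg_of_nonpos ht (by linarith), ?_⟩, ?_⟩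
    · rw [div_lt_one_of_neg (by linarith)]; linarith
    · field_simp; ring

theorem injOn_div_sub_one : InjOn (fun u : ℝ => u / (u - 1)) (Iio 1) := by
  intro u (hu : u < 1) v (hv : v < 1) h
  have hu' : u - 1 ≠ 0 := by linarith
  have hv' : v - 1 ≠ 0 := by linarith
  simp only [div_eq_div_iff hu' hv'] at h
  linarith

theorem hasDerivAt_div_sub_one {u : ℝ} (hu : u ≠ 1) :
    HasDerivAt (fun u : ℝ => u / (u - 1)) (-((1 - u) ^ 2)⁻¹) u := by
  have hne : u - 1 ≠ 0 := sub_ne_zero.mpr hu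
  refine ((hasDerivAt_id' u).div ((hasDerivAt_id' u).sub_const 1) hne).congr_deriv ?_
  rw [← neg_sub u 1, even_two.neg_pow]
  field_simp
  ring

theorem hasDerivWithinAt_div_sub_one_Ico :
    ∀ u ∈ Ico (0 : ℝ) 1, HasDerivWithinAt (fun u : ℝ => u / (u - 1)) (-((1 - u) ^ 2)⁻¹)
      (Ico 0 1) u :=
  fun _ hu => (hasDerivAt_div_sub_one hu.2.ne).hasDerivWithinAt

section ChangeOfVariables

variable {E : Type*} [NormedAddCommGroup E] [NormedSpace ℝ E]

theorem integrableOn_Iic_zero_iff (g : ℝ → E) :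
    IntegrableOn g (Iic 0) ↔
      IntegrableOn (fun u => ((1 - u) ^ 2)⁻¹ • g (u / (u - 1))) (Ico 0 1) := by
  rw [← image_div_sub_one_Ico, integrableOn_image_iff_integrableOn_abs_deriv_smul measurableSet_Ico
    hasDerivWithinAt_div_sub_one_Ico (injOn_div_sub_one.mono fun _ hu => hu.2)]
  simp only [abs_neg, abs_inv, abs_sq]

theorem integral_Iic_zero_eq_integral_Ico (g : ℝ → E) :
    ∫ t in Iic 0, g t = ∫ u in Ico 0 1, ((1 - u) ^ 2)⁻¹ • g (u / (u - 1)) := by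
  rw [← image_div_sub_one_Ico, integral_image_eq_integral_abs_deriv_smul measurableSet_Ico
    hasDerivWithinAt_div_sub_one_Ico (injOn_div_sub_one.mono fun _ hu => hu.2)]
  simp only [abs_neg, abs_inv, abs_sq]

end ChangeOfVariables

theorem inv_sq_smul_comp_div_sub_one {u : ℝ} (hu : u < 1) {p N : ℕ} (hpN : p ≤ N) :
    ((1 - u) ^ 2)⁻¹ • ((u / (u - 1)) ^ p * (1 - u / (u - 1)) ^ (-(N : ℤ) - 2))
      = (-1) ^ p * (u ^ p * (1 - u) ^ (N - p)) := by
  have hne : 1 - u ≠ 0 := by linarith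
  have h_one_sub : 1 - u / (u - 1) = (1 - u)⁻¹ := by
    rw [← neg_sub 1 u]; field_simp; ring
  have h_div : u / (u - 1) = -u * (1 - u)⁻¹ := by
    rw [← neg_sub 1 u]; field_simp
  have h_pow : (1 - u) ^ (N + 2) = (1 - u) ^ (N - p) * (1 - u) ^ p * (1 - u) ^ 2 := by
    rw [← pow_add, ← pow_add, Nat.sub_add_cancel hpN]
  rw [smul_eq_mul, h_one_sub, h_div, inv_zpow', show -(-(N : ℤ) - 2) = ((N + 2 : ℕ) : ℤ) by push_cast; ring,
    zpow_natCast, h_pow, mul_pow, neg_pow, inv_pow]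
  field_simp

theorem integrableOn_Iic_pow_mul_one_sub_zpow {p N : ℕ} (hpN : p ≤ N) :
    IntegrableOn (fun t : ℝ => t ^ p * (1 - t) ^ (-(N : ℤ) - 2)) (Iic 0) := by
  rw [integrableOn_Iic_zero_iff, integrableOn_congr_fun
    (fun u hu => inv_sq_smul_comp_div_sub_one hu.2 hpN) measurableSet_Ico]
  exact (Continuous.integrableOn_Icc (by fun_prop)).mono_set Ico_subset_Icc_self

theorem integral_Iic_pow_mul_one_sub_zpow {p N : ℕ} (hpN : p ≤ N) :
    ∫ t in Iic (0 : ℝ), t ^ p * (1 - t) ^ (-(N : ℤ) - 2) = (-1) ^ p / ((N + 1) * N.choose p) := by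
  rw [integral_Iic_zero_eq_integral_Ico, setIntegral_congr_fun measurableSet_Ico
      (fun u hu => inv_sq_smul_comp_div_sub_one hu.2 hpN),
    integral_const_mul, integral_Ico_eq_integral_Ioo, ← integral_Ioc_eq_integral_Ioo,
    ← intervalIntegral.integral_of_le zero_le_one, integral_pow_mul_one_sub_pow,
    factorial_mul_factorial_div_factorial_succ, Nat.add_sub_cancel' hpN, div_eq_mul_inv]

theorem eulerian2_eq_zero_of_le {n : ℕ} (hn : 1 ≤ n) {k : ℤ} (hk : n ≤ k) : eulerian2 n k = 0 := by
  induction n, hn using Nat.le_induction generalizing k with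
  | base =>
    rcases eq_or_lt_of_le hk with rfl | hk
    · norm_num [eulerian2]
    · simp [eulerian2, show k ≠ 0 by omega, show k - 1 ≠ 0 by omega]
  | succ n _ ih =>
    rw [eulerian2, ih (by omega), ih (by omega), mul_zero, mul_zero, add_zero]

theorem E2poly_eq_sum_range {n : ℕ} (hn : 1 ≤ n) (t : ℝ) :
    E2poly n t = ∑ k ∈ Finset.range n, eulerian2 n k * t ^ k := by
  rw [E2poly, Finset.sum_range_succ, eulerian2_eq_zero_of_le hn le_rfl, zero_mul, add_zero]

theorem stmt11 (n : ℕ) (hn : 1 ≤ n) (a : ℕ) (b : ℤ) (hb : 0 ≤ (n : ℤ) + b + 1) :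
    ∫ t in Set.Iic (0 : ℝ), (t ^ a * (1 - t) ^ (-(a : ℤ) - b - 2) * Ffun n t)
      = (-1 : ℝ) ^ a / (2 * (n : ℝ) + (a : ℝ) + (b : ℝ) + 1) *
          ∑ k ∈ Finset.range n,
            (-1 : ℝ) ^ k * eulerian2 n k /
              (Nat.choose (2 * (n : ℤ) + a + b).toNat (k + a) : ℝ) := by
  set N := (2 * (n : ℤ) + a + b).toNat
  have hN : (N : ℤ) = 2 * n + a + b := Int.toNat_of_nonneg (by omega)
  have hkN : ∀ k ∈ Finset.range n, k + a ≤ N := fun k hk => by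
    have := Finset.mem_range.mp hk; omega
  have hexpand : ∀ t ∈ Iic (0 : ℝ), t ^ a * (1 - t) ^ (-(a : ℤ) - b - 2) * Ffun n t
      = ∑ k ∈ Finset.range n, eulerian2 n k * (t ^ (k + a) * (1 - t) ^ (-(N : ℤ) - 2)) := by
    intro t (ht : t ≤ 0)
    have hne : 1 - t ≠ 0 := by linarith
    rw [Ffun, E2poly_eq_sum_range hn, ← neg_sub 1 t, (even_two_mul n).neg_pow, Finset.sum_div,
      Finset.mul_sum, show -(N : ℤ) - 2 = (-(a : ℤ) - b - 2) - (2 * n : ℕ) by push_cast; omega,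
      zpow_sub₀ hne (-(a : ℤ) - b - 2), zpow_natCast]
    refine Finset.sum_congr rfl fun k _ => ?_
    rw [pow_add]
    field_simp
  rw [setIntegral_congr_fun measurableSet_Iic hexpand, integral_finsetSum _
    fun k hk => ((integrableOn_Iic_pow_mul_one_sub_zpow (hkN k hk)).const_mul _), Finset.mul_sum]
  refine Finset.sum_congr rfl fun k hk => ?_
  have hNR : (N : ℝ) = 2 * n + a + b := by exact_mod_cast hN
  rw [integral_const_mul, integral_Iic_pow_mul_one_sub_zpow (hkN k hk), hNR, ← div_div, pow_add]
  ring
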